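/- arXiv:1711.05935 — 4 statements merged into one kernel-verified Lean document; each statement's English description precedes it below -/
import Mathlib

section
/- Let V be a real inner product space of dimension 2n+1 (n ≥ 1) equipped with an almost contact metric algebra (φ, ξ, η), and let Q be a self-adjoint endomorphism of V satisfying Qξ = 2n·ξ and Q∘φ + φ∘Q = 4n·φ. Then the trace of Q equals 2n(2n+1). -/
/-!
Composing `Q ∘ φ + φ ∘ Q = 4n φ` with `φ` and using cyclicity of the trace,
`tr (φ Q φ) = tr (Q φ²)`, gives `2 tr (Q φ²) = 4n tr (φ²)`. Since
`φ² = -id + η ⊗ ξ` and `Qξ = 2n ξ`, the left side is `2(2n - tr Q)` and the right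
side is `4n · (1 - (2n + 1))`.
-/

open scoped RealInnerProductSpace

open LinearMap InnerProductSpace

theorem LinearMap.two_mul_trace_comp_comp_self_of_anticomm {R M : Type*} [CommRing R]
    [AddCommGroup M] [Module R M] [Module.Free R M] [Module.Finite R M]
    {φ Q : M →ₗ[R] M} {c : R} (h : Q ∘ₗ φ + φ ∘ₗ Q = c • φ) :
    2 * trace R M (Q ∘ₗ φ ∘ₗ φ) = c * trace R M (φ ∘ₗ φ) := by
  have hφQφ : φ ∘ₗ Q ∘ₗ φ = c • (φ ∘ₗ φ) - Q ∘ₗ φ ∘ₗ φ := by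
    rw [eq_sub_iff_add_eq, ← comp_assoc, ← comp_assoc, ← add_comp, add_comm, h,
      smul_comp]
  have hcycle : trace R M (φ ∘ₗ Q ∘ₗ φ) = trace R M (Q ∘ₗ φ ∘ₗ φ) := by
    rw [trace_comp_comm', comp_assoc]
  rw [hφQφ, map_sub, map_smul, smul_eq_mul] at hcycle
  linear_combination -hcycle

theorem stmt_1_general {V : Type*} [NormedAddCommGroup V] [InnerProductSpace ℝ V]
    [FiniteDimensional ℝ V] (n : ℕ)
    (hdim : Module.finrank ℝ V = 2 * n + 1)
    (ξ : V) (hξ : ‖ξ‖ = 1) (φ : V →ₗ[ℝ] V)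
    (hφ2 : ∀ X : V, φ (φ X) = -X + ⟪X, ξ⟫ • ξ)
    (Q : V →ₗ[ℝ] V)
    (hQξ : Q ξ = ((2 * n : ℝ)) • ξ)
    (hQφ : ∀ X : V, Q (φ X) + φ (Q X) = ((4 * n : ℝ)) • φ X) :
    LinearMap.trace ℝ V Q = 2 * n * (2 * n + 1) := by
  set P : V →ₗ[ℝ] V := (rankOne ℝ ξ ξ).toLinearMap
  have htrP : trace ℝ V P = 1 := by
    rw [trace_rankOne, real_inner_self_eq_norm_sq, hξ, one_pow]
  have hφφ : φ ∘ₗ φ = P - LinearMap.id := by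
    ext X
    simp [P, hφ2, real_inner_comm, neg_add_eq_sub]
  have hQP : Q ∘ₗ P = (2 * n : ℝ) • P := by
    ext X
    simp [P, hQξ, smul_smul, mul_comm]
  have key := two_mul_trace_comp_comp_self_of_anticomm (c := 4 * (n : ℝ)) (LinearMap.ext hQφ)
  rw [hφφ, comp_sub, comp_id, hQP] at key
  simp only [map_sub, map_smul, htrP, trace_id, hdim, smul_eq_mul] at key
  push_cast at key
  linarith

/-- In an almost contact metric algebra `(φ, ξ, η)` on a real inner
product space `V` of dimension `2n+1` (`n ≥ 1`), if a self-adjoint endomorphism `Q`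
satisfies `Qξ = 2n·ξ` and `Q∘φ + φ∘Q = 4n·φ`, then `tr Q = 2n(2n+1)`. -/
theorem stmt_1 {V : Type*} [NormedAddCommGroup V] [InnerProductSpace ℝ V]
    [FiniteDimensional ℝ V] (n : ℕ) (hn : 1 ≤ n)
    (hdim : Module.finrank ℝ V = 2 * n + 1)
    (ξ : V) (hξ : ‖ξ‖ = 1) (φ : V →ₗ[ℝ] V)
    (hφξ : φ ξ = 0)
    (hφ2 : ∀ X : V, φ (φ X) = -X + ⟪X, ξ⟫ • ξ)
    (hφm : ∀ X Y : V, ⟪φ X, φ Y⟫ = ⟪X, Y⟫ - ⟪X, ξ⟫ * ⟪Y, ξ⟫)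
    (Q : V →ₗ[ℝ] V) (hQ : Q.IsSymmetric)
    (hQξ : Q ξ = ((2 * n : ℝ)) • ξ)
    (hQφ : ∀ X : V, Q (φ X) + φ (Q X) = ((4 * n : ℝ)) • φ X) :
    LinearMap.trace ℝ V Q = 2 * n * (2 * n + 1) :=
  stmt_1_general n hdim ξ hξ φ hφ2 Q hQξ hQφ
end

section
/- Let V be a real inner product space of dimension 2n+1 (n ≥ 1) equipped with an almost contact metric algebra (φ, ξ, η), and let Q be a self-adjoint endomorphism of V satisfying Qξ = 2n·ξ, Q∘φ + φ∘Q = 4n·φ, and tr(Q²) = 2n·tr(Q). Then Q = 2n·id. -/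
open scoped RealInnerProductSpace

/-!
Put `P = Q - 2n • id`. It is symmetric, kills `ξ` and anticommutes with `φ`, so `P = -P ∘ φ ∘ φ`;
as `P ∘ φ` anticommutes with `φ`, the trace of `P ∘ φ ∘ φ` vanishes, hence `tr P = 0`. Expanding
`tr (Q ∘ Q) = 2n • tr Q` then gives `tr (P ∘ P) = 0`, which forces the symmetric `P` to vanish.
-/

namespace LinearMap

theorem trace_comp_eq_zero_of_comp_eq_neg {R M : Type*} [CommRing R] [IsAddTorsionFree R]
    [AddCommGroup M] [Module R M] [Module.Free R M] [Module.Finite R M] {A B : M →ₗ[R] M}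
    (h : A ∘ₗ B = -(B ∘ₗ A)) :
    trace R M (A ∘ₗ B) = 0 :=
  self_eq_neg.mp <| calc
    trace R M (A ∘ₗ B) = trace R M (B ∘ₗ A) := trace_comp_comm' B A
    _ = -trace R M (A ∘ₗ B) := by rw [← neg_neg (B ∘ₗ A), ← h, map_neg]

theorem IsSymmetric.eq_zero_of_trace_comp_self_eq_zero {𝕜 E : Type*} [RCLike 𝕜]
    [NormedAddCommGroup E] [InnerProductSpace 𝕜 E] [FiniteDimensional 𝕜 E]
    {T : E →ₗ[𝕜] E} (hT : T.IsSymmetric) (h : trace 𝕜 E (T ∘ₗ T) = 0) : T = 0 := by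
  set b := stdOrthonormalBasis 𝕜 E
  have hsum : ∑ i, ‖T (b i)‖ ^ 2 = 0 := by
    have hterm : ∀ i, RCLike.re (inner 𝕜 (b i) ((T ∘ₗ T) (b i))) = ‖T (b i)‖ ^ 2 := fun i ↦ by
      rw [comp_apply, ← hT, inner_self_eq_norm_sq]
    simpa only [trace_eq_sum_inner _ b, map_sum, hterm, map_zero] using congrArg RCLike.re h
  have hb : ∀ i, T (b i) = 0 := fun i ↦ by
    simpa using (Finset.sum_eq_zero_iff_of_nonneg fun i _ ↦ sq_nonneg ‖T (b i)‖).mp hsum i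
      (Finset.mem_univ i)
  exact b.toBasis.ext fun i ↦ by simpa using hb i

end LinearMap

open LinearMap

theorem stmt_3_general {V : Type*} [NormedAddCommGroup V] [InnerProductSpace ℝ V]
    [FiniteDimensional ℝ V] (n : ℕ)
    (hdim : Module.finrank ℝ V = 2 * n + 1)
    (ξ : V) (φ : V →ₗ[ℝ] V)
    (hφ2 : ∀ X : V, φ (φ X) = -X + ⟪X, ξ⟫ • ξ)
    (Q : V →ₗ[ℝ] V) (hQ : Q.IsSymmetric)
    (hQξ : Q ξ = ((2 * n : ℝ)) • ξ)
    (hQφ : ∀ X : V, Q (φ X) + φ (Q X) = ((4 * n : ℝ)) • φ X)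
    (htr : LinearMap.trace ℝ V (Q ∘ₗ Q) = 2 * n * LinearMap.trace ℝ V Q) :
    Q = ((2 * n : ℝ)) • LinearMap.id := by
  set P := Q - (2 * n : ℝ) • LinearMap.id with hP
  have hPξ : P ξ = 0 := by simp [hP, hQξ]
  have hPφ : P ∘ₗ φ = -(φ ∘ₗ P) := by
    ext X
    simp only [hP, comp_apply, LinearMap.sub_apply, LinearMap.smul_apply, id_apply,
      LinearMap.neg_apply, map_sub, map_smul]
    linear_combination (norm := module) hQφ X
  have hPφφ : P ∘ₗ φ ∘ₗ φ = -P := by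
    ext X
    simp [hφ2, hPξ]
  have htrP : trace ℝ V P = 0 := by
    rw [← neg_eq_zero, ← map_neg, ← hPφφ, ← comp_assoc]
    refine trace_comp_eq_zero_of_comp_eq_neg ?_
    rw [← comp_assoc, ← neg_neg (φ ∘ₗ P), ← hPφ, neg_comp, neg_neg]
  have htrPP : trace ℝ V (P ∘ₗ P) = 0 := by
    have hQP : Q = P + (2 * n : ℝ) • LinearMap.id := by rw [hP, sub_add_cancel]
    rw [hQP] at htr
    simp only [add_comp, comp_add, smul_comp, comp_smul, id_comp, comp_id, map_add, map_smul,
      htrP, trace_id, hdim, smul_eq_mul] at htr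
    push_cast at htr
    linear_combination htr
  have hPsymm : P.IsSymmetric := hQ.sub (IsSymmetric.id.smul (by simp))
  exact sub_eq_zero.mp (hPsymm.eq_zero_of_trace_comp_self_eq_zero htrPP)

/-- In an almost contact metric algebra `(φ, ξ, η)` on a real inner
product space `V` of dimension `2n+1` (`n ≥ 1`), if a self-adjoint endomorphism `Q`
satisfies `Qξ = 2n·ξ`, `Q∘φ + φ∘Q = 4n·φ` and `tr(Q²) = 2n·tr Q`, then `Q = 2n·id`. -/
theorem stmt_3 {V : Type*} [NormedAddCommGroup V] [InnerProductSpace ℝ V]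
    [FiniteDimensional ℝ V] (n : ℕ) (hn : 1 ≤ n)
    (hdim : Module.finrank ℝ V = 2 * n + 1)
    (ξ : V) (hξ : ‖ξ‖ = 1) (φ : V →ₗ[ℝ] V)
    (hφξ : φ ξ = 0)
    (hφ2 : ∀ X : V, φ (φ X) = -X + ⟪X, ξ⟫ • ξ)
    (hφm : ∀ X Y : V, ⟪φ X, φ Y⟫ = ⟪X, Y⟫ - ⟪X, ξ⟫ * ⟪Y, ξ⟫)
    (Q : V →ₗ[ℝ] V) (hQ : Q.IsSymmetric)
    (hQξ : Q ξ = ((2 * n : ℝ)) • ξ)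
    (hQφ : ∀ X : V, Q (φ X) + φ (Q X) = ((4 * n : ℝ)) • φ X)
    (htr : LinearMap.trace ℝ V (Q ∘ₗ Q) = 2 * n * LinearMap.trace ℝ V Q) :
    Q = ((2 * n : ℝ)) • LinearMap.id :=
  stmt_3_general n hdim ξ φ hφ2 Q hQ hQξ hQφ htr
end

section
/- Let V be a real inner product space of dimension 2n+1 (n ≥ 1) equipped with an almost contact metric algebra (φ, ξ, η), let Q be a self-adjoint endomorphism of V with Qξ = 2n·ξ, let α be a linear functional on V, and let c be a real number. Suppose that for all X, Y ∈ V: α(X)η(Y) − α(Y)η(X) − 8nc·⟨φX, Y⟩ − 2c·⟨QφY + φQY, X⟩ = 0. Then c·(QφY + φQY − 4n·φY) = 0 for all Y ∈ V; in particular, if c ≠ 0 then Q∘φ + φ∘Q = 4n·φ. -/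
open scoped RealInnerProductSpace

/-- An almost contact metric algebra `(φ, ξ, η)` on `V`, with `η` encoded as `⟪·, ξ⟫`. -/
structure IsAlmostContactMetric {V : Type*} [NormedAddCommGroup V] [InnerProductSpace ℝ V]
    (φ : V →ₗ[ℝ] V) (ξ : V) : Prop where
  norm_reeb : ‖ξ‖ = 1
  apply_reeb : φ ξ = 0
  apply_apply : ∀ X, φ (φ X) = -X + ⟪X, ξ⟫ • ξ
  inner_apply_apply : ∀ X Y, ⟪φ X, φ Y⟫ = ⟪X, Y⟫ - ⟪X, ξ⟫ * ⟪Y, ξ⟫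

namespace IsAlmostContactMetric

variable {V : Type*} [NormedAddCommGroup V] [InnerProductSpace ℝ V]
  {φ : V →ₗ[ℝ] V} {ξ : V} (h : IsAlmostContactMetric φ ξ)
include h

theorem inner_reeb_self : ⟪ξ, ξ⟫ = 1 := by
  rw [real_inner_self_eq_norm_sq, h.norm_reeb, one_pow]

/-- Computing `φ³ X` in two ways gives `η(φ X) ξ = 0`. -/
theorem inner_apply_reeb (X : V) : ⟪φ X, ξ⟫ = 0 := by
  have hξ : ξ ≠ 0 := norm_ne_zero_iff.mp (h.norm_reeb ▸ one_ne_zero)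
  have hcube : φ (φ (φ X)) = -φ X := by
    rw [h.apply_apply X, map_add, map_neg, map_smul, h.apply_reeb, smul_zero, add_zero]
  rw [h.apply_apply (φ X), neg_add_eq_sub, sub_eq_neg_self] at hcube
  exact (smul_eq_zero_iff_left hξ).mp hcube

theorem inner_apply_left (X Y : V) : ⟪φ X, Y⟫ = -⟪X, φ Y⟫ := by
  have hmetric := h.inner_apply_apply (φ X) Y
  rw [h.apply_apply X, h.inner_apply_reeb X, inner_add_left, inner_neg_left,
    real_inner_smul_left, real_inner_comm (φ Y) ξ, h.inner_apply_reeb Y] at hmetric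
  linarith

end IsAlmostContactMetric

theorem stmt_5_general {V : Type*} [NormedAddCommGroup V] [InnerProductSpace ℝ V]
    (n : ℕ)
    (ξ : V) (hξ : ‖ξ‖ = 1) (φ : V →ₗ[ℝ] V)
    (hφξ : φ ξ = 0)
    (hφ2 : ∀ X : V, φ (φ X) = -X + ⟪X, ξ⟫ • ξ)
    (hφm : ∀ X Y : V, ⟪φ X, φ Y⟫ = ⟪X, Y⟫ - ⟪X, ξ⟫ * ⟪Y, ξ⟫)
    (Q : V →ₗ[ℝ] V)
    (hQξ : Q ξ = ((2 * n : ℝ)) • ξ)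
    (α : V →ₗ[ℝ] ℝ) (c : ℝ)
    (hmain : ∀ X Y : V,
      α X * ⟪Y, ξ⟫ - α Y * ⟪X, ξ⟫ - 8 * n * c * ⟪φ X, Y⟫
        - 2 * c * ⟪Q (φ Y) + φ (Q Y), X⟫ = 0) :
    (∀ Y : V, c • (Q (φ Y) + φ (Q Y) - ((4 * n : ℝ)) • φ Y) = 0) ∧
      (c ≠ 0 → ∀ Y : V, Q (φ Y) + φ (Q Y) = ((4 * n : ℝ)) • φ Y) := by
  have hacm : IsAlmostContactMetric φ ξ := ⟨hξ, hφξ, hφ2, hφm⟩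
  -- `Y = ξ` in `hmain` shows that `α` is a multiple of `η`, so the `α`-terms cancel.
  have hα (X : V) : α X = α ξ * ⟪X, ξ⟫ := by
    have hX := hmain X ξ
    rw [hφξ, map_zero, hQξ, map_smul, hφξ, smul_zero, add_zero, inner_zero_left,
      hacm.inner_apply_reeb X, hacm.inner_reeb_self] at hX
    linarith
  have hmain' (Y : V) : c • (Q (φ Y) + φ (Q Y) - ((4 * n : ℝ)) • φ Y) = 0 := by
    refine ext_inner_right ℝ fun X => ?_
    have hXY := hmain X Y
    rw [hα X, hα Y, hacm.inner_apply_left, real_inner_comm (φ Y) X] at hXY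
    rw [inner_zero_left, real_inner_smul_left, inner_sub_left, real_inner_smul_left]
    linear_combination (-1 / 2 : ℝ) * hXY
  refine ⟨hmain', fun hc Y => ?_⟩
  exact sub_eq_zero.mp ((smul_eq_zero_iff_right hc).mp (hmain' Y))

/-- In an almost contact metric algebra `(φ, ξ, η)` on a real inner
product space `V` of dimension `2n+1` (`n ≥ 1`), let `Q` be self-adjoint with
`Qξ = 2n·ξ`, let `α` be a linear functional and `c ∈ ℝ`. If for all `X, Y`:
`α(X)η(Y) − α(Y)η(X) − 8nc·⟪φX, Y⟫ − 2c·⟪QφY + φQY, X⟫ = 0`, then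
`c·(QφY + φQY − 4n·φY) = 0` for all `Y`; in particular, if `c ≠ 0` then
`Q∘φ + φ∘Q = 4n·φ`. -/
theorem stmt_5 {V : Type*} [NormedAddCommGroup V] [InnerProductSpace ℝ V]
    [FiniteDimensional ℝ V] (n : ℕ) (hn : 1 ≤ n)
    (hdim : Module.finrank ℝ V = 2 * n + 1)
    (ξ : V) (hξ : ‖ξ‖ = 1) (φ : V →ₗ[ℝ] V)
    (hφξ : φ ξ = 0)
    (hφ2 : ∀ X : V, φ (φ X) = -X + ⟪X, ξ⟫ • ξ)
    (hφm : ∀ X Y : V, ⟪φ X, φ Y⟫ = ⟪X, Y⟫ - ⟪X, ξ⟫ * ⟪Y, ξ⟫)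
    (Q : V →ₗ[ℝ] V) (hQ : Q.IsSymmetric)
    (hQξ : Q ξ = ((2 * n : ℝ)) • ξ)
    (α : V →ₗ[ℝ] ℝ) (c : ℝ)
    (hmain : ∀ X Y : V,
      α X * ⟪Y, ξ⟫ - α Y * ⟪X, ξ⟫ - 8 * n * c * ⟪φ X, Y⟫
        - 2 * c * ⟪Q (φ Y) + φ (Q Y), X⟫ = 0) :
    (∀ Y : V, c • (Q (φ Y) + φ (Q Y) - ((4 * n : ℝ)) • φ Y) = 0) ∧
      (c ≠ 0 → ∀ Y : V, Q (φ Y) + φ (Q Y) = ((4 * n : ℝ)) • φ Y) :=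
  stmt_5_general n ξ hξ φ hφξ hφ2 hφm Q hQξ α c hmain
end

section
/- Let V be a real inner product space of dimension 2n+1 (n ≥ 1) equipped with an almost contact metric algebra (φ, ξ, η), and let κ, μ be real numbers. Let h be a self-adjoint endomorphism of V satisfying h∘φ = −φ∘h and h² = (κ − 1)·φ², and define the endomorphism Q by QX = [2(n−1) − nμ]·X + [2(n−1) + μ]·hX + [2(1−n) + n(2κ + μ)]·η(X)ξ. If QφX + φQX − φQhX − hQφX − 4nκ·φX = 0 for all X ∈ V, then κ(μ − 2) = μ(n + 1). -/
open scoped RealInnerProductSpace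

/-!
Evaluate the hypothesis at a nonzero `X ⊥ ξ`. Both `φX` and `hX` are orthogonal to `ξ` (the
first because `φ³ = -φ`, the second because `h²ξ = 0` and `h` is symmetric), so the `η(·)ξ`
part of `Q` drops out everywhere; using `hφ = -φh` the `h`-terms cancel and
`h²X = (1 - κ)X`, `φ²X = -X` collapse the identity to
`(2[2(n-1) - nμ] + 2[2(n-1) + μ](κ - 1) - 4nκ) • φX = 0`. Since `φ²X = -X ≠ 0`, the
coefficient vanishes, which is the claimed relation.
-/

section

variable {V : Type*} [NormedAddCommGroup V] [InnerProductSpace ℝ V]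

lemma exists_ne_zero_inner_eq_zero [FiniteDimensional ℝ V] (hV : 2 ≤ Module.finrank ℝ V)
    (ξ : V) : ∃ X : V, X ≠ 0 ∧ ⟪X, ξ⟫ = 0 := by
  have hK : (ℝ ∙ ξ)ᗮ ≠ ⊥ := by
    intro hK
    have hsum := Submodule.finrank_add_finrank_orthogonal (ℝ ∙ ξ)
    have hspan : Module.finrank ℝ (ℝ ∙ ξ) ≤ 1 := (finrank_span_le_card {ξ}).trans (by simp)
    rw [hK, finrank_bot] at hsum
    omega
  obtain ⟨X, hXmem, hX0⟩ := Submodule.exists_mem_ne_zero_of_ne_bot hK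
  exact ⟨X, hX0, real_inner_comm ξ X ▸
    (Submodule.mem_orthogonal_singleton_iff_inner_right.mp hXmem)⟩

lemma LinearMap.IsSymmetric.apply_eq_zero_of_apply_apply_eq_zero {T : V →ₗ[ℝ] V}
    (hT : T.IsSymmetric) {x : V} (hx : T (T x) = 0) : T x = 0 := by
  rw [← inner_self_eq_zero (𝕜 := ℝ), hT, hx, inner_zero_right]

variable {ξ : V} {φ : V →ₗ[ℝ] V}

lemma apply_apply_apply_eq_neg (hφξ : φ ξ = 0) (hφ2 : ∀ X : V, φ (φ X) = -X + ⟪X, ξ⟫ • ξ)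
    (X : V) : φ (φ (φ X)) = -φ X := by
  simp [hφ2 X, hφξ]

lemma inner_apply_eq_zero_of_sq_eq (hξ : ξ ≠ 0) (hφξ : φ ξ = 0)
    (hφ2 : ∀ X : V, φ (φ X) = -X + ⟪X, ξ⟫ • ξ) (X : V) : ⟪φ X, ξ⟫ = 0 := by
  have hφ3 := apply_apply_apply_eq_neg hφξ hφ2 X
  rw [hφ2 (φ X), add_eq_left] at hφ3
  exact (smul_eq_zero.mp hφ3).resolve_right hξ

lemma criticalPoint_apply_of_inner_eq_zero (hφξ : φ ξ = 0)
    (hφ2 : ∀ X : V, φ (φ X) = -X + ⟪X, ξ⟫ • ξ) (hηφ : ∀ X : V, ⟪φ X, ξ⟫ = 0)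
    {h : V →ₗ[ℝ] V} {κ : ℝ} (hηh : ∀ X : V, ⟪h X, ξ⟫ = 0)
    (hhφ : ∀ X : V, h (φ X) = -φ (h X)) (hh2 : ∀ X : V, h (h X) = (κ - 1) • φ (φ X))
    {a b c : ℝ} {Q : V →ₗ[ℝ] V} (hQ : ∀ X : V, Q X = a • X + b • h X + c • (⟪X, ξ⟫ • ξ))
    {X : V} (hX : ⟪X, ξ⟫ = 0) :
    Q (φ X) + φ (Q X) - φ (Q (h X)) - h (Q (φ X)) = (2 * a + 2 * b * (κ - 1)) • φ X := by
  simp only [hQ, map_add, map_smul, map_neg, hhφ, hh2, apply_apply_apply_eq_neg hφξ hφ2, hηφ,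
    hηh, hX, zero_smul, smul_zero, add_zero, smul_neg]
  module

end

theorem stmt_7_general {V : Type*} [NormedAddCommGroup V] [InnerProductSpace ℝ V]
    [FiniteDimensional ℝ V] (n : ℕ) (hn : 1 ≤ n)
    (hdim : Module.finrank ℝ V = 2 * n + 1)
    (ξ : V) (hξ : ‖ξ‖ = 1) (φ : V →ₗ[ℝ] V)
    (hφξ : φ ξ = 0)
    (hφ2 : ∀ X : V, φ (φ X) = -X + ⟪X, ξ⟫ • ξ)
    (κ μ : ℝ) (h : V →ₗ[ℝ] V) (hh : h.IsSymmetric)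
    (hhφ : ∀ X : V, h (φ X) = -φ (h X))
    (hh2 : ∀ X : V, h (h X) = (κ - 1) • φ (φ X))
    (Q : V →ₗ[ℝ] V)
    (hQdef : ∀ X : V, Q X = (2 * ((n : ℝ) - 1) - n * μ) • X
      + (2 * ((n : ℝ) - 1) + μ) • h X
      + (2 * (1 - (n : ℝ)) + n * (2 * κ + μ)) • (⟪X, ξ⟫ • ξ))
    (hmain : ∀ X : V, Q (φ X) + φ (Q X) - φ (Q (h X)) - h (Q (φ X))
      - ((4 * n * κ : ℝ)) • φ X = 0) :
    κ * (μ - 2) = μ * ((n : ℝ) + 1) := by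
  have hξ0 : ξ ≠ 0 := norm_ne_zero_iff.mp (by rw [hξ]; exact one_ne_zero)
  have hηh : ∀ X : V, ⟪h X, ξ⟫ = 0 := fun X => by
    rw [hh, hh.apply_eq_zero_of_apply_apply_eq_zero (by simp [hh2, hφξ]), inner_zero_right]
  obtain ⟨X, hX0, hX⟩ := exists_ne_zero_inner_eq_zero (by omega) ξ
  have hφX : φ X ≠ 0 := fun hφX => hX0 (by simpa [hφX, hX] using hφ2 X)
  have hcoeff := hmain X
  rw [criticalPoint_apply_of_inner_eq_zero hφξ hφ2 (inner_apply_eq_zero_of_sq_eq hξ0 hφξ hφ2)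
    hηh hhφ hh2 hQdef hX, ← sub_smul, smul_eq_zero] at hcoeff
  linear_combination (hcoeff.resolve_right hφX) / 2

/-- In an almost contact metric algebra `(φ, ξ, η)` on a real inner
product space `V` of dimension `2n+1` (`n ≥ 1`), let `κ, μ ∈ ℝ` and let `h` be a
self-adjoint endomorphism with `h∘φ = −φ∘h` and `h² = (κ−1)·φ²`, and let
`QX = [2(n−1) − nμ]·X + [2(n−1) + μ]·hX + [2(1−n) + n(2κ+μ)]·η(X)ξ`.
If `QφX + φQX − φQhX − hQφX − 4nκ·φX = 0` for all `X`, then `κ(μ−2) = μ(n+1)`. -/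
theorem stmt_7 {V : Type*} [NormedAddCommGroup V] [InnerProductSpace ℝ V]
    [FiniteDimensional ℝ V] (n : ℕ) (hn : 1 ≤ n)
    (hdim : Module.finrank ℝ V = 2 * n + 1)
    (ξ : V) (hξ : ‖ξ‖ = 1) (φ : V →ₗ[ℝ] V)
    (hφξ : φ ξ = 0)
    (hφ2 : ∀ X : V, φ (φ X) = -X + ⟪X, ξ⟫ • ξ)
    (hφm : ∀ X Y : V, ⟪φ X, φ Y⟫ = ⟪X, Y⟫ - ⟪X, ξ⟫ * ⟪Y, ξ⟫)
    (κ μ : ℝ) (h : V →ₗ[ℝ] V) (hh : h.IsSymmetric)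
    (hhφ : ∀ X : V, h (φ X) = -φ (h X))
    (hh2 : ∀ X : V, h (h X) = (κ - 1) • φ (φ X))
    (Q : V →ₗ[ℝ] V)
    (hQdef : ∀ X : V, Q X = (2 * ((n : ℝ) - 1) - n * μ) • X
      + (2 * ((n : ℝ) - 1) + μ) • h X
      + (2 * (1 - (n : ℝ)) + n * (2 * κ + μ)) • (⟪X, ξ⟫ • ξ))
    (hmain : ∀ X : V, Q (φ X) + φ (Q X) - φ (Q (h X)) - h (Q (φ X))
      - ((4 * n * κ : ℝ)) • φ X = 0) :
    κ * (μ - 2) = μ * ((n : ℝ) + 1) :=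
  stmt_7_general n hn hdim ξ hξ φ hφξ hφ2 κ μ h hh hhφ hh2 Q hQdef hmain
end
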